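/- Unordered noncrossing pairs of k-element subsets of [n] are in bijection with 2-column rectangular semistandard Young tableaux with k rows and entries in [n]: the map sending a noncrossing pair {I,J} to the tableau I ∪ J (row-wise sorted union) is a bijection onto the set of such tableaux. -/
import Mathlib


open Finset

/-- `allLT I J` means `max I < min J` (vacuously true if either set is empty). -/
def allLT (I J : Finset ℕ) : Prop := ∀ i ∈ I, ∀ j ∈ J, i < j

/-- `I` and `J` are weakly separated. -/
def WeaklySeparated (I J : Finset ℕ) : Prop :=
  (∃ I1 I2 : Finset ℕ, Disjoint I1 I2 ∧ I1 ∪ I2 = I \ J ∧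
      allLT I1 (J \ I) ∧ allLT (J \ I) I2) ∨
  (∃ J1 J2 : Finset ℕ, Disjoint J1 J2 ∧ J1 ∪ J2 = J \ I ∧
      allLT J1 (I \ J) ∧ allLT (I \ J) J2)

/-- the set `{i_a, i_{a+1}, ..., i_b}` of entries of `I` in (1-indexed) positions `a` to `b`. -/
def posSlice (I : Finset ℕ) (a b : ℕ) : Finset ℕ :=
  I.filter fun x => a ≤ (I.filter (· ≤ x)).card ∧ (I.filter (· ≤ x)).card ≤ b

/-- the pair of `k`-subsets `I`, `J` is noncrossing. -/
def Noncrossing (k : ℕ) (I J : Finset ℕ) : Prop :=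
  ∀ a b : ℕ, 1 ≤ a → a < b → b ≤ k →
    WeaklySeparated (posSlice I a b) (posSlice J a b) ∨
    posSlice I (a + 1) (b - 1) ≠ posSlice J (a + 1) (b - 1)

/-- the `a`-th smallest entry of `I` (1-indexed). -/
def nth (I : Finset ℕ) (a : ℕ) : ℕ := (I.sort (· ≤ ·)).getD (a - 1) 0

/-- `T` is a rectangular semistandard Young tableau with entries in `[n]`. -/
def IsSSYT {k m : ℕ} (n : ℕ) (T : Fin k → Fin m → ℕ) : Prop :=
  (∀ i j, T i j ∈ Finset.Icc 1 n) ∧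
  (∀ i (j j' : Fin m), j ≤ j' → T i j ≤ T i j') ∧
  (∀ (i i' : Fin k) j, i < i' → T i j < T i' j)

-- WS basic lemmas
lemma WS_symm {I J : Finset ℕ} (h : WeaklySeparated I J) : WeaklySeparated J I := h.symm

lemma WS_of_allLT {I J : Finset ℕ} (h : allLT (I \ J) (J \ I)) : WeaklySeparated I J :=
  Or.inl ⟨I \ J, ∅, disjoint_bot_right, union_empty _, h, fun _ _ j hj => absurd hj (notMem_empty j)⟩

lemma WS_of_allLT' {I J : Finset ℕ} (h : allLT (J \ I) (I \ J)) : WeaklySeparated I J :=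
  Or.inl ⟨∅, I \ J, disjoint_bot_left, empty_union _, fun i hi => absurd hi (notMem_empty i), h⟩

lemma WS_of_subsingleton {I J : Finset ℕ} {x y : ℕ} (hx : I \ J ⊆ {x}) (hy : J \ I ⊆ {y}) :
    WeaklySeparated I J := by
  rcases lt_or_ge x y with h | h
  · exact WS_of_allLT fun i hi j hj => by
      rw [mem_singleton.1 (hx hi), mem_singleton.1 (hy hj)]; exact h
  · refine WS_of_allLT' fun j hj i hi => ?_
    have hix := mem_singleton.1 (hx hi)
    have hjy := mem_singleton.1 (hy hj)
    rw [hix, hjy]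
    rcases h.lt_or_eq with h' | h'
    · exact h'
    · exfalso
      rw [hix] at hi; rw [hjy, h'] at hj
      exact (mem_sdiff.1 hj).2 (mem_sdiff.1 hi).1

lemma not_WS {I J : Finset ℕ} {p1 q1 p2 q2 : ℕ} (hp1 : p1 ∈ I \ J) (hq1 : q1 ∈ J \ I)
    (hp2 : p2 ∈ I \ J) (hq2 : q2 ∈ J \ I) (h1 : p1 < q1) (h2 : q1 < p2) (h3 : p2 < q2) :
    ¬ WeaklySeparated I J := by
  rintro (⟨I1, I2, _, hun, hlt1, hlt2⟩ | ⟨J1, J2, _, hun, hlt1, hlt2⟩)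
  · rcases mem_union.1 (hun ▸ hp2) with h | h
    · exact absurd (hlt1 _ h _ hq1) (by omega)
    · exact absurd (hlt2 _ hq2 _ h) (by omega)
  · rcases mem_union.1 (hun ▸ hq1) with h | h
    · exact absurd (hlt1 _ h _ hp1) (by omega)
    · exact absurd (hlt2 _ hp2 _ h) (by omega)

-- bridge lemmas
lemma nth_eq_orderEmbOfFin {I : Finset ℕ} {k : ℕ} (hI : I.card = k) {a : ℕ} (ha : a < k) :
    nth I (a + 1) = I.orderEmbOfFin hI ⟨a, ha⟩ := by
  rw [nth, Finset.orderEmbOfFin_apply]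
  simp only [Nat.add_sub_cancel]
  exact List.getD_eq_getElem _ _ (by rw [Finset.length_sort, hI]; exact ha)

lemma nth_mem {I : Finset ℕ} {k : ℕ} (hI : I.card = k) {a : ℕ} (ha : a < k) :
    nth I (a + 1) ∈ I := by
  rw [nth_eq_orderEmbOfFin hI ha]; exact Finset.orderEmbOfFin_mem I hI _

lemma nth_strictMono {I : Finset ℕ} {k : ℕ} (hI : I.card = k) {a b : ℕ} (hab : a < b)
    (hb : b < k) : nth I (a + 1) < nth I (b + 1) := by
  rw [nth_eq_orderEmbOfFin hI (hab.trans hb), nth_eq_orderEmbOfFin hI hb]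
  exact (I.orderEmbOfFin hI).strictMono (by simp [Fin.lt_def, hab])

-- membership characterization
lemma mem_iff_nth {I : Finset ℕ} {k : ℕ} (hI : I.card = k) {x : ℕ} :
    x ∈ I ↔ ∃ c < k, nth I (c + 1) = x := by
  constructor
  · intro hx
    have : x ∈ Set.range (I.orderEmbOfFin hI) := by
      rw [Finset.range_orderEmbOfFin]; exact hx
    obtain ⟨c, hc⟩ := this
    exact ⟨c, c.2, by rw [nth_eq_orderEmbOfFin hI c.2]; exact hc⟩
  · rintro ⟨c, hc, rfl⟩
    exact nth_mem hI hc

lemma rank_nth {I : Finset ℕ} {k : ℕ} (hI : I.card = k) {a : ℕ} (ha : a < k) :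
    (I.filter (· ≤ nth I (a + 1))).card = a + 1 := by
  have hkey : I.filter (· ≤ nth I (a + 1)) =
      (Finset.Iic (⟨a, ha⟩ : Fin k)).image (I.orderEmbOfFin hI) := by
    ext x
    simp only [mem_filter, Finset.mem_image, Finset.mem_Iic]
    constructor
    · rintro ⟨hx, hle⟩
      obtain ⟨c, hc, rfl⟩ := (mem_iff_nth hI).1 hx
      rw [nth_eq_orderEmbOfFin hI hc] at hle ⊢
      rw [nth_eq_orderEmbOfFin hI ha] at hle
      exact ⟨⟨c, hc⟩, (I.orderEmbOfFin hI).le_iff_le.1 hle, rfl⟩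
    · rintro ⟨c, hc, rfl⟩
      rw [nth_eq_orderEmbOfFin hI ha]
      exact ⟨Finset.orderEmbOfFin_mem I hI _, (I.orderEmbOfFin hI).le_iff_le.2 hc⟩
  rw [hkey, Finset.card_image_of_injective _ (I.orderEmbOfFin hI).injective, Fin.card_Iic]

lemma posSlice_eq_image {I : Finset ℕ} {k : ℕ} (hI : I.card = k) {a b : ℕ} (ha : 1 ≤ a)
    (hb1 : 1 ≤ b) (hbk : b ≤ k) :
    posSlice I a b = (Finset.Icc (a - 1) (b - 1)).image (fun c => nth I (c + 1)) := by
  ext x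
  simp only [posSlice, mem_filter, Finset.mem_image, Finset.mem_Icc]
  constructor
  · rintro ⟨hx, h1, h2⟩
    obtain ⟨c, hc, rfl⟩ := (mem_iff_nth hI).1 hx
    rw [rank_nth hI hc] at h1 h2
    exact ⟨c, ⟨by omega, by omega⟩, rfl⟩
  · rintro ⟨c, ⟨hc1, hc2⟩, rfl⟩
    have hck : c < k := by omega
    rw [rank_nth hI hck]
    exact ⟨nth_mem hI hck, by omega, by omega⟩

lemma image_eq_on {S : Finset ℕ} {f g : ℕ → ℕ}
    (hf : ∀ c ∈ S, ∀ d ∈ S, c < d → f c < f d) (hg : ∀ c ∈ S, ∀ d ∈ S, c < d → g c < g d)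
    (h : S.image f = S.image g) : ∀ c ∈ S, f c = g c := by
  set m := S.card with hm
  set e := S.orderEmbOfFin hm.symm with he
  have hemem : ∀ i, e i ∈ S := fun i => Finset.orderEmbOfFin_mem _ _ _
  have hF : StrictMono (fun i : Fin m => f (e i)) :=
    fun i j hij => hf _ (hemem i) _ (hemem j) (e.strictMono hij)
  have hG : StrictMono (fun i : Fin m => g (e i)) :=
    fun i j hij => hg _ (hemem i) _ (hemem j) (e.strictMono hij)
  have hT : (S.image f).card = m := by
    rw [Finset.card_image_of_injOn]
    intro c hc d hd hcd
    by_contra hne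
    rcases lt_or_gt_of_ne hne with h' | h'
    · exact absurd hcd (hf _ hc _ hd h').ne
    · exact absurd hcd.symm (hf _ hd _ hc h').ne
  have hFmem : ∀ i, f (e i) ∈ S.image f := fun i => Finset.mem_image_of_mem f (hemem i)
  have hGmem : ∀ i, g (e i) ∈ S.image f := fun i => h ▸ Finset.mem_image_of_mem g (hemem i)
  have hFeq := Finset.orderEmbOfFin_unique hT hFmem hF
  have hGeq := Finset.orderEmbOfFin_unique hT hGmem hG
  intro c hc
  have : c ∈ Set.range e := by rw [he, Finset.range_orderEmbOfFin]; exact hc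
  obtain ⟨i, rfl⟩ := this
  calc f (e i) = (S.image f).orderEmbOfFin hT i := congrFun hFeq i
  _ = g (e i) := (congrFun hGeq i).symm

/-- 0-indexed functional version of noncrossing. -/
def NCfun (k : ℕ) (f g : ℕ → ℕ) : Prop :=
  ∀ A B : ℕ, A < B → B < k →
    WeaklySeparated ((Finset.Icc A B).image f) ((Finset.Icc A B).image g) ∨
    ∃ c, A < c ∧ c < B ∧ f c ≠ g c

lemma noncrossing_iff_NCfun {I J : Finset ℕ} {k : ℕ} (hI : I.card = k) (hJ : J.card = k) :
    Noncrossing k I J ↔ NCfun k (fun c => nth I (c + 1)) (fun c => nth J (c + 1)) := by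
  have hmonoI : ∀ {S : Finset ℕ}, (∀ c ∈ S, c < k) →
      ∀ c ∈ S, ∀ d ∈ S, c < d → nth I (c+1) < nth I (d+1) := by
    intro S hS c hc d hd hcd; exact nth_strictMono hI hcd (hS d hd)
  have hmonoJ : ∀ {S : Finset ℕ}, (∀ c ∈ S, c < k) →
      ∀ c ∈ S, ∀ d ∈ S, c < d → nth J (c+1) < nth J (d+1) := by
    intro S hS c hc d hd hcd; exact nth_strictMono hJ hcd (hS d hd)
  constructor
  · intro hNC A B hAB hBk
    have h := hNC (A + 1) (B + 1) (by omega) (by omega) (by omega)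
    rw [posSlice_eq_image hI (by omega) (by omega) (by omega),
        posSlice_eq_image hJ (by omega) (by omega) (by omega)] at h
    simp only [Nat.add_sub_cancel] at h
    rcases h with h | h
    · exact Or.inl h
    · right
      by_contra hcon
      push_neg at hcon
      apply h
      rw [posSlice_eq_image hI (by omega) (by omega) (by omega),
          posSlice_eq_image hJ (by omega) (by omega) (by omega)]
      apply Finset.image_congr
      intro c hc
      simp only [Finset.coe_Icc, Set.mem_Icc] at hc
      exact hcon c (by omega) (by omega)
  · intro hNC a b ha hab hbk
    have h := hNC (a - 1) (b - 1) (by omega) (by omega)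
    rw [posSlice_eq_image hI ha (by omega) hbk, posSlice_eq_image hJ ha (by omega) hbk]
    rcases h with h | h
    · exact Or.inl h
    · right
      obtain ⟨c, hc1, hc2, hc3⟩ := h
      rcases Nat.lt_or_ge (b - 1) (a + 1) with hE | hE
      · omega
      intro heq
      rw [posSlice_eq_image hI (by omega) (by omega) (by omega),
          posSlice_eq_image hJ (by omega) (by omega) (by omega)] at heq
      have hsub : ∀ x ∈ Finset.Icc (a + 1 - 1) (b - 1 - 1), x < k := by
        intro x hx; simp only [Finset.mem_Icc] at hx; omega
      have := image_eq_on (hmonoI hsub) (hmonoJ hsub) heq c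
        (by simp only [Finset.mem_Icc]; omega)
      exact hc3 this

section Core

variable {k : ℕ} {u v f g : ℕ → ℕ}

/-- rows pair condition -/
def RowPair (k : ℕ) (u v f g : ℕ → ℕ) : Prop :=
  ∀ a < k, (f a = u a ∧ g a = v a) ∨ (f a = v a ∧ g a = u a)

lemma rowPair_of_minmax (hmin : ∀ a < k, min (f a) (g a) = u a)
    (hmax : ∀ a < k, max (f a) (g a) = v a) : RowPair k u v f g := by
  intro a ha
  have h1 := hmin a ha
  have h2 := hmax a ha
  omega

lemma rowPair_symm (h : RowPair k u v f g) : RowPair k u v g f := by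
  intro a ha; have := h a ha; omega

lemma equalRow (hp : RowPair k u v f g) {a : ℕ} (ha : a < k) (h : u a = v a) :
    f a = u a ∧ g a = u a := by
  have := hp a ha; omega

/-- the gap property between consecutive differing rows that are not adjacent-overlapping -/
lemma gap_lemma (huv : ∀ a < k, u a ≤ v a) (hu : ∀ a b : ℕ, a < b → b < k → u a < u b)
    (hv : ∀ a b : ℕ, a < b → b < k → v a < v b) {a b : ℕ} (hab : a < b) (hbk : b < k)
    (hint : ∀ c, a < c → c < b → u c = v c) (h : ¬(b = a + 1 ∧ u b ≤ v a)) : v a < u b := by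
  rcases Nat.lt_or_ge (a + 1) b with hlt | hge
  · have h1 : v a < v (a + 1) := hv a (a + 1) (by omega) (by omega)
    have h2 : u (a + 1) = v (a + 1) := hint (a + 1) (by omega) hlt
    have h3 : u (a + 1) < u b := hu (a + 1) b hlt hbk
    omega
  · have hE : b = a + 1 := by omega
    rw [hE]
    rcases not_and_or.1 h with h' | h'
    · exact absurd hE h'.elim
    · rw [hE] at h'; omega

lemma force_overlap (huv : ∀ a < k, u a ≤ v a) (hp : RowPair k u v f g)
    (hf : ∀ a b : ℕ, a < b → b < k → f a < f b) (hg : ∀ a b : ℕ, a < b → b < k → g a < g b)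
    {a b : ℕ} (hab : b = a + 1) (hob : u b ≤ v a) (hbk : b < k) (hdb : u b ≠ v b) :
    f b = u b ↔ f a = u a := by
  have hak : a < k := by omega
  have hpa := hp a hak
  have hpb := hp b hbk
  have hfab : f a < f b := hf a b (by omega) hbk
  have hgab : g a < g b := hg a b (by omega) hbk
  have h1 := huv a hak
  have h2 := huv b hbk
  constructor
  · intro hfb
    by_contra hfa
    have : f a = v a := by omega
    omega
  · intro hfa
    have hga : g a = v a := by omega
    have : g b = v b := by omega
    omega

lemma not_WS_parallel (huv : ∀ a < k, u a ≤ v a) (hu : ∀ a b : ℕ, a < b → b < k → u a < u b)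
    (hv : ∀ a b : ℕ, a < b → b < k → v a < v b) (hp : RowPair k u v f g)
    {a b : ℕ} (hab : a < b) (hbk : b < k) (hda : u a ≠ v a) (hdb : u b ≠ v b)
    (hint : ∀ c, a < c → c < b → u c = v c) (hgap : v a < u b)
    (hfa : f a = u a) (hga : g a = v a) (hfb : f b = u b) (hgb : g b = v b) :
    ¬ WeaklySeparated ((Finset.Icc a b).image f) ((Finset.Icc a b).image g) := by
  have hak : a < k := by omega
  have huava : u a < v a := lt_of_le_of_ne (huv a hak) hda
  have hubvb : u b < v b := lt_of_le_of_ne (huv b hbk) hdb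
  -- values of f and g on the interval
  have hfval : ∀ c, a < c → c < b → f c = u c := fun c h1 h2 =>
    (equalRow hp (by omega) (hint c h1 h2)).1
  have hgval : ∀ c, a < c → c < b → g c = u c := fun c h1 h2 =>
    (equalRow hp (by omega) (hint c h1 h2)).2
  have hmemf : ∀ x ∈ (Finset.Icc a b).image f, x = u a ∨ x = u b ∨
      (∃ c, a < c ∧ c < b ∧ x = u c) := by
    intro x hx
    obtain ⟨c, hc, rfl⟩ := Finset.mem_image.1 hx
    simp only [Finset.mem_Icc] at hc
    rcases Nat.eq_or_lt_of_le hc.1 with hE | h1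
    · left; rw [← hE, hfa]
    rcases Nat.eq_or_lt_of_le hc.2 with hE | h2
    · right; left; rw [hE, hfb]
    · right; right; exact ⟨c, h1, h2, hfval c h1 h2⟩
  have hmemg : ∀ x ∈ (Finset.Icc a b).image g, x = v a ∨ x = v b ∨
      (∃ c, a < c ∧ c < b ∧ x = u c) := by
    intro x hx
    obtain ⟨c, hc, rfl⟩ := Finset.mem_image.1 hx
    simp only [Finset.mem_Icc] at hc
    rcases Nat.eq_or_lt_of_le hc.1 with hE | h1
    · left; rw [← hE, hga]
    rcases Nat.eq_or_lt_of_le hc.2 with hE | h2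
    · right; left; rw [hE, hgb]
    · right; right; exact ⟨c, h1, h2, hgval c h1 h2⟩
  -- interior values are strictly between v a and u b
  have hintbound : ∀ c, a < c → c < b → v a < u c ∧ u c < u b := by
    intro c h1 h2
    constructor
    · have := hv a c h1 (by omega); have := hint c h1 h2; omega
    · exact hu c b h2 hbk
  have haIcc : a ∈ Finset.Icc a b := by simp [Finset.mem_Icc]; omega
  have hbIcc : b ∈ Finset.Icc a b := by simp [Finset.mem_Icc]; omega
  have hpua : u a ∈ (Finset.Icc a b).image f \ (Finset.Icc a b).image g := by
    rw [mem_sdiff]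
    refine ⟨Finset.mem_image.2 ⟨a, haIcc, hfa⟩, fun hmem => ?_⟩
    rcases hmemg _ hmem with h | h | ⟨c, h1, h2, h⟩
    · omega
    · have := hv a b hab hbk; omega
    · have := (hintbound c h1 h2).1; omega
  have hpub : u b ∈ (Finset.Icc a b).image f \ (Finset.Icc a b).image g := by
    rw [mem_sdiff]
    refine ⟨Finset.mem_image.2 ⟨b, hbIcc, hfb⟩, fun hmem => ?_⟩
    rcases hmemg _ hmem with h | h | ⟨c, h1, h2, h⟩
    · omega
    · omega
    · have := (hintbound c h1 h2).2; omega
  have hqva : v a ∈ (Finset.Icc a b).image g \ (Finset.Icc a b).image f := by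
    rw [mem_sdiff]
    refine ⟨Finset.mem_image.2 ⟨a, haIcc, hga⟩, fun hmem => ?_⟩
    rcases hmemf _ hmem with h | h | ⟨c, h1, h2, h⟩
    · omega
    · omega
    · have := (hintbound c h1 h2).1; omega
  have hqvb : v b ∈ (Finset.Icc a b).image g \ (Finset.Icc a b).image f := by
    rw [mem_sdiff]
    refine ⟨Finset.mem_image.2 ⟨b, hbIcc, hgb⟩, fun hmem => ?_⟩
    rcases hmemf _ hmem with h | h | ⟨c, h1, h2, h⟩
    · omega
    · omega
    · have := (hintbound c h1 h2).2; omega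
  exact not_WS hpua hqva hpub hqvb huava hgap hubvb

lemma force_gap (huv : ∀ a < k, u a ≤ v a) (hu : ∀ a b : ℕ, a < b → b < k → u a < u b)
    (hv : ∀ a b : ℕ, a < b → b < k → v a < v b) (hp : RowPair k u v f g)
    (hNC : NCfun k f g) {a b : ℕ} (hab : a < b) (hbk : b < k)
    (hda : u a ≠ v a) (hdb : u b ≠ v b)
    (hint : ∀ c, a < c → c < b → u c = v c) (hgap : v a < u b) :
    f b = v b ↔ f a = u a := by
  have hak : a < k := by omega
  have hpa := hp a hak
  have hpb := hp b hbk
  have hWS : WeaklySeparated ((Finset.Icc a b).image f) ((Finset.Icc a b).image g) := by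
    rcases hNC a b hab hbk with h | ⟨c, h1, h2, h3⟩
    · exact h
    · exact absurd ((equalRow hp (by omega) (hint c h1 h2)).1.trans
        (equalRow hp (by omega) (hint c h1 h2)).2.symm) h3
  constructor
  · intro hfb
    by_contra hfa
    -- f a = v a, f b = v b, so g a = u a, g b = u b : parallel for (g, f)
    have hfa' : f a = v a := by omega
    have hga : g a = u a := by omega
    have hgb : g b = u b := by omega
    exact not_WS_parallel huv hu hv (rowPair_symm hp) hab hbk hda hdb hint hgap
      hga hfa' hgb hfb (WS_symm hWS)
  · intro hfa
    by_contra hfb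
    have hfb' : f b = u b := by omega
    have hga : g a = v a := by omega
    have hgb : g b = v b := by omega
    exact not_WS_parallel huv hu hv hp hab hbk hda hdb hint hgap
      hfa hga hfb' hgb hWS

end Core

section Construction

variable (u v : ℕ → ℕ)

/-- orientation of each row in the canonical noncrossing pair -/
def rOri : ℕ → Bool
  | 0 => false
  | a + 1 => if u (a + 1) = v (a + 1) then rOri a
      else if u a ≠ v a ∧ u (a + 1) ≤ v a then rOri a else !(rOri a)

def fCon (a : ℕ) : ℕ := if rOri u v a then v a else u a

def gCon (a : ℕ) : ℕ := if rOri u v a then u a else v a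

lemma rOri_succ (u v : ℕ → ℕ) (a : ℕ) : rOri u v (a + 1) =
    if u (a + 1) = v (a + 1) then rOri u v a
    else if u a ≠ v a ∧ u (a + 1) ≤ v a then rOri u v a else !(rOri u v a) := rfl

variable {u v} {k : ℕ}

lemma con_rowPair : RowPair k u v (fCon u v) (gCon u v) := by
  intro a _
  unfold fCon gCon
  rcases rOri u v a with _ | _ <;> simp

lemma rOri_const {a b : ℕ} (hab : a ≤ b) (hint : ∀ c, a < c → c ≤ b → u c = v c) :
    rOri u v b = rOri u v a := by
  induction b with
  | zero => have : a = 0 := by omega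
            rw [this]
  | succ m ih =>
    rcases Nat.eq_or_lt_of_le hab with hE | hlt
    · rw [hE]
    · have h1 : u (m + 1) = v (m + 1) := hint (m + 1) (by omega) (le_refl _)
      have h2 : rOri u v (m + 1) = rOri u v m := by
        rw [rOri_succ, if_pos h1]
      rw [h2]
      exact ih (by omega) (fun c h1 h2 => hint c h1 (by omega))

lemma rOri_rel {a b : ℕ} (hab : a < b) (hda : u a ≠ v a) (hdb : u b ≠ v b)
    (hint : ∀ c, a < c → c < b → u c = v c) :
    rOri u v b = if b = a + 1 ∧ u b ≤ v a then rOri u v a else !(rOri u v a) := by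
  obtain ⟨m, rfl⟩ : ∃ m, b = m + 1 := ⟨b - 1, by omega⟩
  have hma : a ≤ m := by omega
  have hconst : rOri u v m = rOri u v a :=
    rOri_const hma (fun c h1 h2 => hint c h1 (by omega))
  rcases Nat.eq_or_lt_of_le hma with hE | hlt
  · subst hE
    rw [rOri_succ, if_neg hdb]
    by_cases hcase : u (a + 1) ≤ v a
    · rw [if_pos ⟨hda, hcase⟩, if_pos ⟨rfl, hcase⟩]
    · rw [if_neg (fun h => hcase h.2), if_neg (fun h => hcase h.2)]
  · have hm_eq : u m = v m := hint m (by omega) (by omega)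
    have : rOri u v (m + 1) = !(rOri u v m) := by
      rw [rOri_succ, if_neg hdb, if_neg (fun h => h.1 hm_eq)]
    rw [this, hconst, if_neg (by omega)]

variable (huv : ∀ a < k, u a ≤ v a) (hu : ∀ a b : ℕ, a < b → b < k → u a < u b)
  (hv : ∀ a b : ℕ, a < b → b < k → v a < v b)

include huv hu hv in
lemma fCon_step {a : ℕ} (ha : a + 1 < k) : fCon u v a < fCon u v (a + 1) ∧
    gCon u v a < gCon u v (a + 1) := by
  have h1 : u a < u (a + 1) := hu a (a + 1) (by omega) ha
  have h2 : v a < v (a + 1) := hv a (a + 1) (by omega) ha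
  have h3 := huv a (by omega)
  have h4 := huv (a + 1) ha
  unfold fCon gCon
  by_cases hc1 : u (a + 1) = v (a + 1)
  · have : rOri u v (a + 1) = rOri u v a := by rw [rOri_succ, if_pos hc1]
    rw [this]
    rcases rOri u v a with _ | _ <;> simp <;> omega
  · by_cases hc2 : u a ≠ v a ∧ u (a + 1) ≤ v a
    · have : rOri u v (a + 1) = rOri u v a := by rw [rOri_succ, if_neg hc1, if_pos hc2]
      rw [this]
      rcases rOri u v a with _ | _ <;> simp <;> omega
    · have hstep : rOri u v (a + 1) = !(rOri u v a) := by
        rw [rOri_succ, if_neg hc1, if_neg hc2]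
      have hgap : v a < u (a + 1) := by
        rcases not_and_or.1 hc2 with h | h
        · push_neg at h; omega
        · omega
      rw [hstep]
      rcases rOri u v a with _ | _ <;> simp <;> omega

include huv hu hv in
lemma fCon_mono : ∀ a b : ℕ, a < b → b < k → fCon u v a < fCon u v b := by
  intro a b hab hbk
  induction b with
  | zero => omega
  | succ m ih =>
    rcases Nat.eq_or_lt_of_le hab with hE | hlt
    · rw [← hE] at hbk ⊢
      exact (fCon_step huv hu hv hbk).1
    · exact (ih (by omega) (by omega)).trans ((fCon_step huv hu hv hbk).1)

include huv hu hv in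
lemma gCon_mono : ∀ a b : ℕ, a < b → b < k → gCon u v a < gCon u v b := by
  intro a b hab hbk
  induction b with
  | zero => omega
  | succ m ih =>
    rcases Nat.eq_or_lt_of_le hab with hE | hlt
    · rw [← hE] at hbk ⊢
      exact (fCon_step huv hu hv hbk).2
    · exact (ih (by omega) (by omega)).trans ((fCon_step huv hu hv hbk).2)

end Construction

section ExistenceWS

variable {k : ℕ} {u v f g : ℕ → ℕ}

/-- WS for an overlapping adjacent pair of differing rows with the same orientation. -/
lemma WS_overlap (huv : ∀ a < k, u a ≤ v a) {a b : ℕ} (hab : b = a + 1) (hbk : b < k)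
    (hob : u b ≤ v a) (hda : u a ≠ v a) (hdb : u b ≠ v b) (hvab : v a < v b)
    (hfa : f a = u a) (hga : g a = v a) (hfb : f b = u b) (hgb : g b = v b) :
    WeaklySeparated ((Finset.Icc a b).image f) ((Finset.Icc a b).image g) := by
  have haIcc : a ∈ Finset.Icc a b := by simp [Finset.mem_Icc]; omega
  have h1 : u a < v a := lt_of_le_of_ne (huv a (by omega)) hda
  have h2 : u b < v b := lt_of_le_of_ne (huv b hbk) hdb
  apply WS_of_allLT
  intro x hx y hy
  rw [mem_sdiff] at hx hy
  obtain ⟨cx, hcx, rfl⟩ := Finset.mem_image.1 hx.1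
  obtain ⟨cy, hcy, rfl⟩ := Finset.mem_image.1 hy.1
  simp only [Finset.mem_Icc] at hcx hcy
  have hxcases : f cx = u a ∨ f cx = u b := by
    rcases Nat.eq_or_lt_of_le hcx.1 with hE | hlt
    · left; rw [← hE, hfa]
    · right; have : cx = b := by omega
      rw [this, hfb]
  have hycases : g cy = v a ∨ g cy = v b := by
    rcases Nat.eq_or_lt_of_le hcy.1 with hE | hlt
    · left; rw [← hE, hga]
    · right; have : cy = b := by omega
      rw [this, hgb]
  have hxna : f cx ≠ v a := fun h => hx.2 (Finset.mem_image.2 ⟨a, haIcc, hga.trans h.symm⟩)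
  omega

/-- WS for a gap-separated pair of differing rows with opposite orientations. -/
lemma WS_gap (huv : ∀ a < k, u a ≤ v a) (hu : ∀ a b : ℕ, a < b → b < k → u a < u b)
    (hv : ∀ a b : ℕ, a < b → b < k → v a < v b) (hp : RowPair k u v f g)
    {a b : ℕ} (hab : a < b) (hbk : b < k) (hda : u a ≠ v a) (hdb : u b ≠ v b)
    (hint : ∀ c, a < c → c < b → u c = v c) (hgap : v a < u b)
    (hfa : f a = u a) (hga : g a = v a) (hfb : f b = v b) (hgb : g b = u b) :
    WeaklySeparated ((Finset.Icc a b).image f) ((Finset.Icc a b).image g) := by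
  have h1 : u a < v a := lt_of_le_of_ne (huv a (by omega)) hda
  have h2 : u b < v b := lt_of_le_of_ne (huv b hbk) hdb
  have hintb : ∀ c, a < c → c < b → v a < u c ∧ u c < u b := by
    intro c hc1 hc2
    constructor
    · have := hv a c hc1 (by omega); have := hint c hc1 hc2; omega
    · exact hu c b hc2 hbk
  have hgvals : ∀ y ∈ (Finset.Icc a b).image g, y = v a ∨ y = u b ∨
      ∃ c, a < c ∧ c < b ∧ y = u c := by
    intro y hy
    obtain ⟨c, hc, rfl⟩ := Finset.mem_image.1 hy
    simp only [Finset.mem_Icc] at hc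
    rcases Nat.eq_or_lt_of_le hc.1 with hE | hlt1
    · left; rw [← hE, hga]
    rcases Nat.eq_or_lt_of_le hc.2 with hE | hlt2
    · right; left; rw [hE, hgb]
    · right; right
      exact ⟨c, hlt1, hlt2, (equalRow hp (by omega) (hint c hlt1 hlt2)).2⟩
  left
  refine ⟨((Finset.Icc a b).image f \ (Finset.Icc a b).image g).filter (· ≤ u a),
    ((Finset.Icc a b).image f \ (Finset.Icc a b).image g).filter (¬ · ≤ u a),
    ?_, ?_, ?_, ?_⟩
  · exact Finset.disjoint_filter_filter_not _ _ _
  · exact Finset.filter_union_filter_not_eq _ _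
  · intro x hx y hy
    rw [Finset.mem_filter] at hx
    rw [mem_sdiff] at hy
    rcases hgvals _ hy.1 with h | h | ⟨c, hc1, hc2, h⟩ <;>
      [skip; skip; have := (hintb c hc1 hc2).1] <;> omega
  · intro y hy x hx
    rw [Finset.mem_filter] at hx
    rw [mem_sdiff] at hy
    -- x ∈ image f, x > u a, x ∉ image g : x must be v b
    have hxvb : x = v b := by
      obtain ⟨hx1, hx2⟩ := hx
      obtain ⟨c, hc, rfl⟩ := Finset.mem_image.1 (mem_sdiff.1 hx1).1
      simp only [Finset.mem_Icc] at hc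
      rcases Nat.eq_or_lt_of_le hc.1 with hE | hlt1
      · exfalso; rw [← hE, hfa] at hx2; omega
      rcases Nat.eq_or_lt_of_le hc.2 with hE | hlt2
      · rw [hE, hfb]
      · exfalso
        have h3 : f c = u c := (equalRow hp (by omega) (hint c hlt1 hlt2)).1
        apply (mem_sdiff.1 hx1).2
        apply Finset.mem_image.2 ⟨c, by simp [Finset.mem_Icc]; omega, ?_⟩
        rw [h3, (equalRow hp (by omega) (hint c hlt1 hlt2)).2]
    rcases hgvals _ hy.1 with h | h | ⟨c, hc1, hc2, h⟩ <;>
      [skip; skip; have := (hintb c hc1 hc2).2] <;> omega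

end ExistenceWS

section ConNC

variable {k : ℕ} {u v : ℕ → ℕ}

lemma con_NCfun (huv : ∀ a < k, u a ≤ v a) (hu : ∀ a b : ℕ, a < b → b < k → u a < u b)
    (hv : ∀ a b : ℕ, a < b → b < k → v a < v b) : NCfun k (fCon u v) (gCon u v) := by
  intro A B hAB hBk
  by_cases hdiff : ∃ c, A < c ∧ c < B ∧ u c ≠ v c
  · obtain ⟨c, h1, h2, h3⟩ := hdiff
    right
    refine ⟨c, h1, h2, ?_⟩
    rcases con_rowPair (k := k) (u := u) (v := v) c (by omega) with ⟨e1, e2⟩ | ⟨e1, e2⟩ <;> omega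
  · push_neg at hdiff
    left
    have hint : ∀ c, A < c → c < B → u c = v c := hdiff
    by_cases hdA : u A = v A
    · apply WS_of_subsingleton (x := fCon u v B) (y := gCon u v B)
      · intro x hx
        rw [mem_sdiff] at hx
        obtain ⟨c, hc, rfl⟩ := Finset.mem_image.1 hx.1
        simp only [Finset.mem_Icc] at hc
        rcases Nat.eq_or_lt_of_le hc.2 with hE | hlt
        · simp [hE]
        · exfalso
          have hfg : fCon u v c = gCon u v c := by
            rcases Nat.eq_or_lt_of_le hc.1 with hE2 | hlt2
            · have := equalRow (con_rowPair (k := k) (u := u) (v := v)) (by omega) (hE2 ▸ hdA)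
              omega
            · have := equalRow (con_rowPair (k := k) (u := u) (v := v)) (by omega) (hint c hlt2 hlt)
              omega
          exact hx.2 (Finset.mem_image.2 ⟨c, by simp [Finset.mem_Icc]; omega, hfg.symm⟩)
      · intro y hy
        rw [mem_sdiff] at hy
        obtain ⟨c, hc, rfl⟩ := Finset.mem_image.1 hy.1
        simp only [Finset.mem_Icc] at hc
        rcases Nat.eq_or_lt_of_le hc.2 with hE | hlt
        · simp [hE]
        · exfalso
          have hfg : fCon u v c = gCon u v c := by
            rcases Nat.eq_or_lt_of_le hc.1 with hE2 | hlt2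
            · have := equalRow (con_rowPair (k := k) (u := u) (v := v)) (by omega) (hE2 ▸ hdA)
              omega
            · have := equalRow (con_rowPair (k := k) (u := u) (v := v)) (by omega) (hint c hlt2 hlt)
              omega
          exact hy.2 (Finset.mem_image.2 ⟨c, by simp [Finset.mem_Icc]; omega, hfg⟩)
    · by_cases hdB : u B = v B
      · apply WS_of_subsingleton (x := fCon u v A) (y := gCon u v A)
        · intro x hx
          rw [mem_sdiff] at hx
          obtain ⟨c, hc, rfl⟩ := Finset.mem_image.1 hx.1
          simp only [Finset.mem_Icc] at hc
          rcases Nat.eq_or_lt_of_le hc.1 with hE | hlt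
          · simp [← hE]
          · exfalso
            have hfg : fCon u v c = gCon u v c := by
              rcases Nat.eq_or_lt_of_le hc.2 with hE2 | hlt2
              · have := equalRow (con_rowPair (k := k) (u := u) (v := v)) (by omega) (hE2 ▸ hdB)
                omega
              · have := equalRow (con_rowPair (k := k) (u := u) (v := v)) (by omega) (hint c hlt hlt2)
                omega
            exact hx.2 (Finset.mem_image.2 ⟨c, by simp [Finset.mem_Icc]; omega, hfg.symm⟩)
        · intro y hy
          rw [mem_sdiff] at hy
          obtain ⟨c, hc, rfl⟩ := Finset.mem_image.1 hy.1
          simp only [Finset.mem_Icc] at hc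
          rcases Nat.eq_or_lt_of_le hc.1 with hE | hlt
          · simp [← hE]
          · exfalso
            have hfg : fCon u v c = gCon u v c := by
              rcases Nat.eq_or_lt_of_le hc.2 with hE2 | hlt2
              · have := equalRow (con_rowPair (k := k) (u := u) (v := v)) (by omega) (hE2 ▸ hdB)
                omega
              · have := equalRow (con_rowPair (k := k) (u := u) (v := v)) (by omega) (hint c hlt hlt2)
                omega
            exact hy.2 (Finset.mem_image.2 ⟨c, by simp [Finset.mem_Icc]; omega, hfg⟩)
      · have hrel := rOri_rel (u := u) (v := v) hAB hdA hdB hint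
        by_cases hover : B = A + 1 ∧ u B ≤ v A
        · rw [if_pos hover] at hrel
          rcases hB : rOri u v A with _ | _ <;> rw [hB] at hrel
          · exact WS_overlap huv hover.1 hBk hover.2 hdA hdB (hv A B hAB hBk)
              (by simp [fCon, hB]) (by simp [gCon, hB]) (by simp [fCon, hrel])
              (by simp [gCon, hrel])
          · exact WS_symm (WS_overlap huv hover.1 hBk hover.2 hdA hdB (hv A B hAB hBk)
              (by simp [gCon, hB]) (by simp [fCon, hB]) (by simp [gCon, hrel])
              (by simp [fCon, hrel]))
        · rw [if_neg hover] at hrel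
          have hgap : v A < u B := gap_lemma huv hu hv hAB hBk hint hover
          rcases hB : rOri u v A with _ | _ <;> rw [hB] at hrel
          · exact WS_gap huv hu hv con_rowPair hAB hBk hdA hdB hint hgap
              (by simp [fCon, hB]) (by simp [gCon, hB]) (by simp [fCon, hrel])
              (by simp [gCon, hrel])
          · exact WS_symm (WS_gap huv hu hv (rowPair_symm con_rowPair) hAB hBk hdA hdB hint hgap
              (by simp [gCon, hB]) (by simp [fCon, hB]) (by simp [gCon, hrel])
              (by simp [fCon, hrel]))

end ConNC

section Unique

variable {k : ℕ} {u v f g f' g' : ℕ → ℕ}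

lemma NCfun_symm (h : NCfun k f g) : NCfun k g f := by
  intro A B h1 h2
  rcases h A B h1 h2 with h | ⟨c, hc1, hc2, hc3⟩
  · exact Or.inl (WS_symm h)
  · exact Or.inr ⟨c, hc1, hc2, hc3.symm⟩

lemma unique_aux (huv : ∀ a < k, u a ≤ v a) (hu : ∀ a b : ℕ, a < b → b < k → u a < u b)
    (hv : ∀ a b : ℕ, a < b → b < k → v a < v b)
    (hp : RowPair k u v f g) (hp' : RowPair k u v f' g')
    (hf : ∀ a b : ℕ, a < b → b < k → f a < f b) (hg : ∀ a b : ℕ, a < b → b < k → g a < g b)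
    (hf' : ∀ a b : ℕ, a < b → b < k → f' a < f' b)
    (hg' : ∀ a b : ℕ, a < b → b < k → g' a < g' b)
    (hNC : NCfun k f g) (hNC' : NCfun k f' g')
    {A₀ : ℕ} (hA₀k : A₀ < k) (hdA₀ : u A₀ ≠ v A₀) (hfirst : ∀ c < A₀, u c = v c)
    (hstart : f' A₀ = f A₀) : ∀ a < k, f' a = f a ∧ g' a = g a := by
  intro a
  induction a using Nat.strong_induction_on with
  | _ a IH =>
  intro hak
  by_cases hda : u a = v a
  · have h1 := equalRow hp hak hda
    have h2 := equalRow hp' hak hda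
    constructor <;> omega
  · rcases Nat.lt_trichotomy a A₀ with h | h | h
    · exact absurd (hfirst a h) hda
    · subst h
      have h1 := hp a hak
      have h2 := hp' a hak
      constructor <;> omega
    · -- A₀ < a : use the previous differing row p
      set p := Nat.findGreatest (fun c => u c ≠ v c) (a - 1) with hpdef
      have hple : p ≤ a - 1 := Nat.findGreatest_le _
      have hPp : u p ≠ v p := by
        have h0 := Nat.findGreatest_spec (P := fun c => u c ≠ v c) (n := a - 1) (m := A₀)
          (by omega) hdA₀
        rwa [← hpdef] at h0
      have hintpa : ∀ c, p < c → c < a → u c = v c := by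
        intro c h1 h2
        by_contra h3
        exact Nat.findGreatest_is_greatest h1 (by omega) h3
      have hpa : p < a := by omega
      have hpk : p < k := by omega
      obtain ⟨ihf, ihg⟩ := IH p hpa hpk
      have hppair := hp p hpk
      have hppair' := hp' p hpk
      have hapair := hp a hak
      have hapair' := hp' a hak
      by_cases hover : a = p + 1 ∧ u a ≤ v p
      · have hiff1 : f a = u a ↔ f p = u p :=
          force_overlap huv hp hf hg hover.1 hover.2 hak hda
        have hiff2 : f' a = u a ↔ f' p = u p :=
          force_overlap huv hp' hf' hg' hover.1 hover.2 hak hda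
        by_cases hh : f a = u a
        · have h5 : f' a = u a := hiff2.2 (by rw [ihf]; exact hiff1.1 hh)
          constructor <;> omega
        · have h4 : f p ≠ u p := fun hc => hh (hiff1.2 hc)
          have h5 : f' a ≠ u a := fun hc => h4 (by rw [← ihf]; exact hiff2.1 hc)
          constructor <;> omega
      · have hgap : v p < u a := gap_lemma huv hu hv hpa hak hintpa hover
        have hiff1 : f a = v a ↔ f p = u p :=
          force_gap huv hu hv hp hNC hpa hak hPp hda hintpa hgap
        have hiff2 : f' a = v a ↔ f' p = u p :=
          force_gap huv hu hv hp' hNC' hpa hak hPp hda hintpa hgap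
        by_cases hh : f a = v a
        · have h5 : f' a = v a := hiff2.2 (by rw [ihf]; exact hiff1.1 hh)
          constructor <;> omega
        · have h4 : f p ≠ u p := fun hc => hh (hiff1.2 hc)
          have h5 : f' a ≠ v a := fun hc => h4 (by rw [← ihf]; exact hiff2.1 hc)
          constructor <;> omega

end Unique

section Package

lemma fun_to_finset {n k : ℕ} {f : ℕ → ℕ}
    (hmono : ∀ a b : ℕ, a < b → b < k → f a < f b) (hbound : ∀ a < k, f a ∈ Finset.Icc 1 n) :
    ((Finset.range k).image f).card = k ∧ ((Finset.range k).image f) ⊆ Finset.Icc 1 n ∧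
    ∀ a < k, nth ((Finset.range k).image f) (a + 1) = f a := by
  have hinj : Set.InjOn f (Finset.range k) := by
    intro x hx y hy hxy
    simp only [coe_range, Set.mem_Iio] at hx hy
    by_contra hne
    rcases lt_or_gt_of_ne hne with h | h
    · exact absurd hxy (hmono x y h hy).ne
    · exact absurd hxy.symm (hmono y x h hx).ne
  have hcard : ((Finset.range k).image f).card = k := by
    rw [Finset.card_image_of_injOn hinj, Finset.card_range]
  refine ⟨hcard, ?_, ?_⟩
  · intro x hx
    obtain ⟨c, hc, rfl⟩ := Finset.mem_image.1 hx
    exact hbound c (Finset.mem_range.1 hc)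
  · intro a ha
    have hF : (fun i : Fin k => f i) = ((Finset.range k).image f).orderEmbOfFin hcard := by
      apply Finset.orderEmbOfFin_unique
      · intro x; exact Finset.mem_image.2 ⟨x, Finset.mem_range.2 x.2, rfl⟩
      · intro x y hxy; exact hmono x y hxy y.2
    rw [nth_eq_orderEmbOfFin hcard ha, ← hF]

lemma finset_eq_image_nth {I : Finset ℕ} {k : ℕ} (hI : I.card = k) :
    I = (Finset.range k).image (fun c => nth I (c + 1)) := by
  ext x
  rw [mem_iff_nth hI]
  simp only [Finset.mem_image, Finset.mem_range]

lemma NCfun_congr {k : ℕ} {f g f₂ g₂ : ℕ → ℕ} (h1 : ∀ c < k, f c = f₂ c)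
    (h2 : ∀ c < k, g c = g₂ c) (h : NCfun k f g) : NCfun k f₂ g₂ := by
  intro A B hAB hBk
  rcases h A B hAB hBk with h | ⟨c, hc1, hc2, hc3⟩
  · left
    rwa [Finset.image_congr (g := f₂) (fun c hc => h1 c (by
        simp only [Finset.coe_Icc, Set.mem_Icc] at hc; omega)),
      Finset.image_congr (g := g₂) (fun c hc => h2 c (by
        simp only [Finset.coe_Icc, Set.mem_Icc] at hc; omega))] at h
  · exact Or.inr ⟨c, hc1, hc2, by rw [← h1 c (by omega), ← h2 c (by omega)]; exact hc3⟩

end Package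

/-- Unordered noncrossing pairs of `k`-subsets of `[n]` are in bijection with 2-column
`k`-row semistandard Young tableaux with entries in `[n]`, via `{I, J} ↦ I ∪ J`. -/
theorem noncrossing_pairs_biject_with_two_column_ssyt (k n : ℕ) :
    (∀ I J : Finset ℕ, I ⊆ Finset.Icc 1 n → J ⊆ Finset.Icc 1 n →
      I.card = k → J.card = k → Noncrossing k I J →
      IsSSYT n (fun (a : Fin k) (c : Fin 2) =>
        if c = 0 then min (nth I ((a : ℕ) + 1)) (nth J ((a : ℕ) + 1))
        else max (nth I ((a : ℕ) + 1)) (nth J ((a : ℕ) + 1)))) ∧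
    (∀ U : Fin k → Fin 2 → ℕ, IsSSYT n U →
      ∃! p : Sym2 (Finset ℕ), ∃ I J : Finset ℕ, p = s(I, J) ∧
        I ⊆ Finset.Icc 1 n ∧ J ⊆ Finset.Icc 1 n ∧ I.card = k ∧ J.card = k ∧
        Noncrossing k I J ∧
        ∀ a : Fin k,
          U a 0 = min (nth I ((a : ℕ) + 1)) (nth J ((a : ℕ) + 1)) ∧
          U a 1 = max (nth I ((a : ℕ) + 1)) (nth J ((a : ℕ) + 1))) := by
  constructor
  · -- Part 1
    intro I J hIs hJs hIc hJc _
    refine ⟨?_, ?_, ?_⟩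
    · intro i j
      dsimp only
      have h1 := Finset.mem_Icc.1 (hIs (nth_mem hIc i.2))
      have h2 := Finset.mem_Icc.1 (hJs (nth_mem hJc i.2))
      by_cases hj : j = 0 <;> simp only [hj, if_true, if_false, reduceIte] <;>
        rw [Finset.mem_Icc] <;> omega
    · intro i j j' hjj'
      dsimp only
      by_cases hj : j = 0
      · by_cases hj' : j' = 0
        · simp [hj, hj']
        · simp only [hj, hj', if_true, if_false, reduceIte]
          exact le_trans (min_le_left _ _) (le_max_left _ _)
      · have hj1 : j = 1 := by omega
        have hj'1 : j' = 1 := by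
          have := hjj'
          fin_cases j <;> fin_cases j' <;> simp_all <;> omega
        simp [hj1, hj'1]
    · intro i i' j hii'
      dsimp only
      have hii : (i : ℕ) < (i' : ℕ) := hii'
      have h1 := nth_strictMono hIc hii i'.2
      have h2 := nth_strictMono hJc hii i'.2
      by_cases hj : j = 0 <;> simp only [hj, reduceIte] <;> omega
  · -- Part 2
    intro U hU
    obtain ⟨hbound, hrow, hcol⟩ := hU
    set uu : ℕ → ℕ := fun c => if h : c < k then U ⟨c, h⟩ 0 else 0 with huu_def
    set vv : ℕ → ℕ := fun c => if h : c < k then U ⟨c, h⟩ 1 else 0 with hvv_def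
    have huuval : ∀ (a : ℕ) (ha : a < k), uu a = U ⟨a, ha⟩ 0 := by
      intro a ha; simp only [huu_def, dif_pos ha]
    have hvvval : ∀ (a : ℕ) (ha : a < k), vv a = U ⟨a, ha⟩ 1 := by
      intro a ha; simp only [hvv_def, dif_pos ha]
    have huv : ∀ a < k, uu a ≤ vv a := by
      intro a ha
      rw [huuval a ha, hvvval a ha]
      exact hrow _ 0 1 (by omega)
    have hu : ∀ a b : ℕ, a < b → b < k → uu a < uu b := by
      intro a b hab hbk
      rw [huuval a (by omega), huuval b hbk]
      exact hcol ⟨a, by omega⟩ ⟨b, hbk⟩ 0 (by simpa [Fin.lt_def])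
    have hv : ∀ a b : ℕ, a < b → b < k → vv a < vv b := by
      intro a b hab hbk
      rw [hvvval a (by omega), hvvval b hbk]
      exact hcol ⟨a, by omega⟩ ⟨b, hbk⟩ 1 (by simpa [Fin.lt_def])
    have hubound : ∀ a < k, uu a ∈ Finset.Icc 1 n := by
      intro a ha; rw [huuval a ha]; exact hbound _ _
    have hvbound : ∀ a < k, vv a ∈ Finset.Icc 1 n := by
      intro a ha; rw [hvvval a ha]; exact hbound _ _
    set f₀ : ℕ → ℕ := fCon uu vv with hf₀def
    set g₀ : ℕ → ℕ := gCon uu vv with hg₀def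
    have hpair₀ : RowPair k uu vv f₀ g₀ := con_rowPair
    have hf₀mono : ∀ a b : ℕ, a < b → b < k → f₀ a < f₀ b := fCon_mono huv hu hv
    have hg₀mono : ∀ a b : ℕ, a < b → b < k → g₀ a < g₀ b := gCon_mono huv hu hv
    have hf₀bound : ∀ a < k, f₀ a ∈ Finset.Icc 1 n := by
      intro a ha
      rcases hpair₀ a ha with ⟨e1, _⟩ | ⟨e1, _⟩ <;> rw [e1]
      · exact hubound a ha
      · exact hvbound a ha
    have hg₀bound : ∀ a < k, g₀ a ∈ Finset.Icc 1 n := by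
      intro a ha
      rcases hpair₀ a ha with ⟨_, e2⟩ | ⟨_, e2⟩ <;> rw [e2]
      · exact hvbound a ha
      · exact hubound a ha
    set I₀ : Finset ℕ := (Finset.range k).image f₀ with hI₀def
    set J₀ : Finset ℕ := (Finset.range k).image g₀ with hJ₀def
    obtain ⟨hI₀c, hI₀s, hI₀nth⟩ := fun_to_finset hf₀mono hf₀bound
    obtain ⟨hJ₀c, hJ₀s, hJ₀nth⟩ := fun_to_finset hg₀mono hg₀bound
    have hNC₀fun : NCfun k f₀ g₀ := con_NCfun huv hu hv
    have hNC₀ : Noncrossing k I₀ J₀ := by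
      rw [noncrossing_iff_NCfun hI₀c hJ₀c]
      exact NCfun_congr (fun c hc => (hI₀nth c hc).symm) (fun c hc => (hJ₀nth c hc).symm)
        hNC₀fun
    refine ⟨s(I₀, J₀), ⟨I₀, J₀, rfl, hI₀s, hJ₀s, hI₀c, hJ₀c, hNC₀, ?_⟩, ?_⟩
    · intro a
      rw [hI₀nth a a.2, hJ₀nth a a.2]
      have h1 := huuval a a.2
      have h2 := hvvval a a.2
      have h3 := huv a a.2
      have hFa : (⟨(a : ℕ), a.2⟩ : Fin k) = a := rfl
      rw [hFa] at h1 h2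
      rcases hpair₀ a a.2 with ⟨e1, e2⟩ | ⟨e1, e2⟩ <;> constructor <;> omega
    · -- uniqueness
      rintro p' ⟨I', J', rfl, hI's, hJ's, hI'c, hJ'c, hNC', hmm'⟩
      set f' : ℕ → ℕ := fun c => nth I' (c + 1) with hf'def
      set g' : ℕ → ℕ := fun c => nth J' (c + 1) with hg'def
      have hf'mono : ∀ a b : ℕ, a < b → b < k → f' a < f' b := fun a b hab hbk =>
        nth_strictMono hI'c hab hbk
      have hg'mono : ∀ a b : ℕ, a < b → b < k → g' a < g' b := fun a b hab hbk =>
        nth_strictMono hJ'c hab hbk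
      have hp' : RowPair k uu vv f' g' := by
        apply rowPair_of_minmax
        · intro a ha
          rw [huuval a ha]
          exact ((hmm' ⟨a, ha⟩).1).symm
        · intro a ha
          rw [hvvval a ha]
          exact ((hmm' ⟨a, ha⟩).2).symm
      have hNC'fun : NCfun k f' g' := (noncrossing_iff_NCfun hI'c hJ'c).1 hNC'
      have hI'eq : I' = (Finset.range k).image f' := finset_eq_image_nth hI'c
      have hJ'eq : J' = (Finset.range k).image g' := finset_eq_image_nth hJ'c
      by_cases hall : ∀ c < k, uu c = vv c
      · have hptw : ∀ c < k, f' c = f₀ c ∧ g' c = g₀ c := by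
          intro c hc
          have e1 := equalRow hp' hc (hall c hc)
          have e2 := equalRow hpair₀ hc (hall c hc)
          constructor <;> omega
        have hIeq : I' = I₀ := by
          rw [hI'eq, hI₀def]
          exact Finset.image_congr fun x hx => (hptw x (by simpa using hx)).1
        have hJeq : J' = J₀ := by
          rw [hJ'eq, hJ₀def]
          exact Finset.image_congr fun x hx => (hptw x (by simpa using hx)).2
        rw [hIeq, hJeq]
      · push_neg at hall
        obtain ⟨c₀, hc₀k, hc₀d⟩ := hall
        have hex : ∃ c, c < k ∧ uu c ≠ vv c := ⟨c₀, hc₀k, hc₀d⟩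
        obtain ⟨A₀, ⟨hA₀k, hA₀d⟩, hfirst⟩ :
            ∃ A, (A < k ∧ uu A ≠ vv A) ∧ ∀ c < A, uu c = vv c := by
          refine ⟨Nat.find hex, Nat.find_spec hex, ?_⟩
          intro c hc
          have hk := (Nat.find_spec hex).1
          have := Nat.find_min hex hc
          by_contra h
          exact this ⟨by omega, h⟩
        rcases hpair₀ A₀ hA₀k with ⟨c1, c2⟩ | ⟨c1, c2⟩ <;>
          rcases hp' A₀ hA₀k with ⟨d1, d2⟩ | ⟨d1, d2⟩
        · -- f₀ = uu, f' = uu : same orientation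
          have heq := unique_aux huv hu hv hpair₀ hp' hf₀mono hg₀mono hf'mono hg'mono
            hNC₀fun hNC'fun hA₀k hA₀d hfirst (by omega)
          have hIeq : I' = I₀ := by
            rw [hI'eq, hI₀def]
            exact Finset.image_congr fun x hx => (heq x (by simpa using hx)).1
          have hJeq : J' = J₀ := by
            rw [hJ'eq, hJ₀def]
            exact Finset.image_congr fun x hx => (heq x (by simpa using hx)).2
          rw [hIeq, hJeq]
        · -- f₀ = uu, f' = vv : swapped
          have heq := unique_aux huv hu hv hpair₀ (rowPair_symm hp') hf₀mono hg₀mono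
            hg'mono hf'mono hNC₀fun (NCfun_symm hNC'fun) hA₀k hA₀d hfirst (by omega)
          have hIeq : J' = I₀ := by
            rw [hJ'eq, hI₀def]
            exact Finset.image_congr fun x hx => (heq x (by simpa using hx)).1
          have hJeq : I' = J₀ := by
            rw [hI'eq, hJ₀def]
            exact Finset.image_congr fun x hx => (heq x (by simpa using hx)).2
          rw [hIeq, hJeq]
          exact Sym2.eq_swap
        · -- f₀ = vv, f' = uu : swapped
          have heq := unique_aux huv hu hv hpair₀ (rowPair_symm hp') hf₀mono hg₀mono
            hg'mono hf'mono hNC₀fun (NCfun_symm hNC'fun) hA₀k hA₀d hfirst (by omega)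
          have hIeq : J' = I₀ := by
            rw [hJ'eq, hI₀def]
            exact Finset.image_congr fun x hx => (heq x (by simpa using hx)).1
          have hJeq : I' = J₀ := by
            rw [hI'eq, hJ₀def]
            exact Finset.image_congr fun x hx => (heq x (by simpa using hx)).2
          rw [hIeq, hJeq]
          exact Sym2.eq_swap
        · -- f₀ = vv, f' = vv : same orientation
          have heq := unique_aux huv hu hv hpair₀ hp' hf₀mono hg₀mono hf'mono hg'mono
            hNC₀fun hNC'fun hA₀k hA₀d hfirst (by omega)
          have hIeq : I' = I₀ := by
            rw [hI'eq, hI₀def]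
            exact Finset.image_congr fun x hx => (heq x (by simpa using hx)).1
          have hJeq : J' = J₀ := by
            rw [hJ'eq, hJ₀def]
            exact Finset.image_congr fun x hx => (heq x (by simpa using hx)).2
          rw [hIeq, hJeq]
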